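/- Let n ≥ 1 be an integer. On the elliptic curve S_n over ℚ(v,t) given by Y² = X³ + (v²−1)((v²−1)−2tⁿ)X² + t^{2n}(v²−1)²X, the point P = (tⁿ(v²−1), tⁿ(v²−1)²) is a ℚ(v,t)-rational point satisfying 2P = (0,0), and P has order exactly 4 in the group of ℚ(v,t)-rational points. (For n = 1 this is the 4-torsion section v ↦ (t(v²−1), t(v²−1)²) of Proposition 4.2.) -/

import Mathlib

/-- The field `ℚ(v,t)` of rational functions in two variables over `ℚ`. -/
noncomputable abbrev Kvt : Type := FractionRing (MvPolynomial (Fin 2) ℚ)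

/-- The variable `v` of `ℚ(v,t)`. -/
noncomputable def vK : Kvt := algebraMap (MvPolynomial (Fin 2) ℚ) Kvt (MvPolynomial.X 0)

/-- The variable `t` of `ℚ(v,t)`. -/
noncomputable def tK : Kvt := algebraMap (MvPolynomial (Fin 2) ℚ) Kvt (MvPolynomial.X 1)

/-- `S_n`: the Weierstrass curve `Y² = X³ + (v² - 1)((v² - 1) - 2tⁿ)X² + t^{2n}(v² - 1)²X`
over `ℚ(v,t)`, a Weierstrass model of the elliptic fibration on the threefold `Z_(n)^(3)`
birational to `Y_(n)^(3)`. -/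
noncomputable def Sn (n : ℕ) : WeierstrassCurve Kvt :=
  ⟨0, (vK ^ 2 - 1) * ((vK ^ 2 - 1) - 2 * tK ^ n), 0, tK ^ (2 * n) * (vK ^ 2 - 1) ^ 2, 0⟩

/-! On `Y² = X³ + a₂X² + a₄X` the tangent at a point `(x, y)` with `y ≠ 0` passes through
`(0, 0)` exactly when `x² = a₄`; its third intersection with the curve is then `(0, 0)`, so
`2(x, y) = (0, 0)`, a point of order `2`, and `(x, y)` has order `4`. For `S_n` and
`x = tⁿ(v² - 1)` one has `x² = t²ⁿ(v² - 1)² = a₄`, and `y = x(v² - 1)`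
since `2x + a₂ = (v² - 1)²`. -/

lemma addOrderOf_eq_four_of_two_nsmul {G : Type*} [AddMonoid G] {P Q : G} (hPQ : 2 • P = Q)
    (hQ : Q ≠ 0) (hQ₂ : 2 • Q = 0) : addOrderOf P = 4 :=
  addOrderOf_eq_prime_pow (p := 2) (n := 1) (by rwa [pow_one, hPQ])
    (by rw [pow_succ, pow_one, mul_nsmul, hPQ, hQ₂])

namespace WeierstrassCurve.Affine

variable {F : Type*} [Field F] {W : Affine F}

lemma negY_of_isCharNeTwoNF [W.IsCharNeTwoNF] (x y : F) : W.negY x y = -y := by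
  simp [negY]

lemma Y_ne_negY_of_Y_ne_zero [W.IsCharNeTwoNF] [NeZero (2 : F)] {x y : F} (hy : y ≠ 0) :
    y ≠ W.negY x y := by
  rw [negY_of_isCharNeTwoNF, Ne, eq_neg_iff_add_eq_zero, ← two_mul]
  exact mul_ne_zero two_ne_zero hy

lemma nonsingular_of_Y_ne_zero [W.IsCharNeTwoNF] [NeZero (2 : F)] {x y : F}
    (h : W.Equation x y) (hy : y ≠ 0) : W.Nonsingular x y :=
  (nonsingular_iff x y).mpr ⟨h, Or.inr (Y_ne_negY_of_Y_ne_zero hy)⟩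

lemma Y_sq_of_equation [W.IsCharNeTwoNF] (h₆ : W.a₆ = 0) {x y : F} (h : W.Equation x y) :
    y ^ 2 = x ^ 3 + W.a₂ * x ^ 2 + W.a₄ * x := by
  simpa [h₆] using (equation_iff x y).mp h

lemma X_ne_zero_of_Y_ne_zero [W.IsCharNeTwoNF] (h₆ : W.a₆ = 0) {x y : F} (h : W.Equation x y)
    (hy : y ≠ 0) : x ≠ 0 := by
  rintro rfl
  exact hy (pow_eq_zero_iff two_ne_zero |>.mp (by simpa using Y_sq_of_equation h₆ h))

variable [DecidableEq F]

lemma slope_self_of_sq_eq_a₄ [W.IsCharNeTwoNF] [NeZero (2 : F)] (h₆ : W.a₆ = 0) {x y : F}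
    (h : W.Equation x y) (hy : y ≠ 0) (hx : x ^ 2 = W.a₄) : W.slope x x y y = y / x := by
  have hxy := Y_sq_of_equation h₆ h
  rw [slope_of_Y_ne rfl (Y_ne_negY_of_Y_ne_zero hy), negY_of_isCharNeTwoNF,
    div_eq_div_iff (by rw [sub_neg_eq_add, ← two_mul]; exact mul_ne_zero two_ne_zero hy)
      (X_ne_zero_of_Y_ne_zero h₆ h hy)]
  simp only [a₁_of_isCharNeTwoNF, zero_mul, sub_zero]
  linear_combination (-2) * hxy + x * hx

namespace Point

lemma two_nsmul_some_zero_zero (h₃ : W.a₃ = 0) (h₀ : W.Nonsingular 0 0) :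
    2 • some _ _ h₀ = 0 := by
  rw [two_nsmul]
  exact add_self_of_Y_eq (by simp [negY, h₃])

lemma two_nsmul_some_of_sq_eq_a₄ [W.IsCharNeTwoNF] [NeZero (2 : F)] {x y : F}
    (h : W.Nonsingular x y) (h₀ : W.Nonsingular 0 0) (hy : y ≠ 0) (hx : x ^ 2 = W.a₄) :
    2 • some _ _ h = some _ _ h₀ := by
  have h₆ : W.a₆ = 0 := (nonsingular_zero.mp h₀).1
  have hx₀ := X_ne_zero_of_Y_ne_zero h₆ h.1 hy
  have hxy := Y_sq_of_equation h₆ h.1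
  have hX : W.addX x x (y / x) = 0 := by
    simp only [addX, a₁_of_isCharNeTwoNF]
    field_simp
    linear_combination hxy - x * hx
  rw [two_nsmul, add_self_of_Y_ne (Y_ne_negY_of_Y_ne_zero hy)]
  congr 1
  · rw [slope_self_of_sq_eq_a₄ h₆ h.1 hy hx, hX]
  · rw [slope_self_of_sq_eq_a₄ h₆ h.1 hy hx, addY, negAddY, hX, negY_of_isCharNeTwoNF]
    field_simp
    ring

end Point

end WeierstrassCurve.Affine

lemma tK_ne_zero : tK ≠ 0 :=
  (map_ne_zero_iff _ (IsFractionRing.injective _ _)).mpr (MvPolynomial.X_ne_zero 1)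

lemma vK_sq_sub_one_ne_zero : vK ^ 2 - 1 ≠ 0 := by
  have hv : vK ^ 2 - 1 = algebraMap (MvPolynomial (Fin 2) ℚ) Kvt (MvPolynomial.X 0 ^ 2 - 1) := by
    simp [vK]
  rw [hv, map_ne_zero_iff _ (IsFractionRing.injective _ _)]
  intro h
  simpa using congrArg MvPolynomial.constantCoeff h

instance isCharNeTwoNF_Sn (n : ℕ) : (Sn n).IsCharNeTwoNF := ⟨rfl, rfl⟩

open WeierstrassCurve.Affine WeierstrassCurve.Affine.Point

theorem stmt13_general (n : ℕ) :
    ∃ (h : (Sn n).toAffine.Nonsingular (tK ^ n * (vK ^ 2 - 1)) (tK ^ n * (vK ^ 2 - 1) ^ 2))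
      (h0 : (Sn n).toAffine.Nonsingular 0 0),
      2 • (WeierstrassCurve.Affine.Point.some _ _ h) = WeierstrassCurve.Affine.Point.some _ _ h0 ∧
      addOrderOf (WeierstrassCurve.Affine.Point.some _ _ h) = 4 := by
  have hy : tK ^ n * (vK ^ 2 - 1) ^ 2 ≠ 0 :=
    mul_ne_zero (pow_ne_zero _ tK_ne_zero) (pow_ne_zero _ vK_sq_sub_one_ne_zero)
  have h : (Sn n).toAffine.Nonsingular (tK ^ n * (vK ^ 2 - 1)) (tK ^ n * (vK ^ 2 - 1) ^ 2) :=
    nonsingular_of_Y_ne_zero (by rw [equation_iff]; simp only [Sn]; ring) hy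
  have h₀ : (Sn n).toAffine.Nonsingular 0 0 := nonsingular_zero.mpr
    ⟨rfl, Or.inr (mul_ne_zero (pow_ne_zero _ tK_ne_zero) (pow_ne_zero _ vK_sq_sub_one_ne_zero))⟩
  have h₂ : 2 • some _ _ h = some _ _ h₀ :=
    two_nsmul_some_of_sq_eq_a₄ h h₀ hy (by simp only [Sn]; ring)
  exact ⟨h, h₀, h₂,
    addOrderOf_eq_four_of_two_nsmul h₂ (some_ne_zero h₀) (two_nsmul_some_zero_zero rfl h₀)⟩

/-- For `n ≥ 1`, on the elliptic curve
`S_n : Y² = X³ + (v² - 1)((v² - 1) - 2tⁿ)X² + t^{2n}(v² - 1)²X` over `ℚ(v,t)`, the point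
`P = (tⁿ(v² - 1), tⁿ(v² - 1)²)` is a rational point satisfying `2P = (0, 0)`, and `P` has
order exactly `4` in the group of `ℚ(v,t)`-rational points. -/
theorem stmt13 (n : ℕ) (hn : 1 ≤ n) :
    ∃ (h : (Sn n).toAffine.Nonsingular (tK ^ n * (vK ^ 2 - 1)) (tK ^ n * (vK ^ 2 - 1) ^ 2))
      (h0 : (Sn n).toAffine.Nonsingular 0 0),
      2 • (WeierstrassCurve.Affine.Point.some _ _ h) = WeierstrassCurve.Affine.Point.some _ _ h0 ∧
      addOrderOf (WeierstrassCurve.Affine.Point.some _ _ h) = 4 :=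
  stmt13_general n
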